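/- Let k ≥ 1 be an integer, let S₁ and S₂ be disjoint finite sets of positive integers, and let α, β be complex numbers with |α| ≤ 1 and |β| ≤ 1. Then the coefficient of q^k in the polynomial ∏_{n∈S₁}(1 − α q^n) · ∏_{n∈S₂}(1 − β q^n) has absolute value at most p(k), the number of partitions of k. -/

import Mathlib

open Polynomial Finset

private lemma coeff_bound (c : ℕ → ℂ) (hc : ∀ n, ‖c n‖ ≤ 1) (S : Finset ℕ) :
    ∀ k, ‖(∏ n ∈ S, (1 - C (c n) * X ^ n)).coeff k‖ ≤
      ((S.powerset.filter (fun T => T.sum id = k)).card : ℝ) := by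
  classical
  induction S using Finset.induction_on with
  | empty =>
    intro k
    by_cases h : k = 0 <;>
      simp [h, Polynomial.coeff_one, Finset.filter_singleton, eq_comm]
  | @insert a S ha ih =>
    intro k
    rw [Finset.prod_insert ha]
    set P : ℂ[X] := ∏ n ∈ S, (1 - C (c n) * X ^ n) with hP
    have hcoeff : ((1 - C (c a) * X ^ a) * P).coeff k
        = P.coeff k - c a * (if a ≤ k then P.coeff (k - a) else 0) := by
      rw [sub_mul, one_mul, coeff_sub]
      congr 1
      rw [mul_assoc, coeff_C_mul, mul_comm (X ^ a : ℂ[X]), Polynomial.coeff_mul_X_pow']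
    rw [hcoeff]
    have hmono : ∀ m, ((S.powerset.filter (fun T => T.sum id = m)).card : ℝ)
        ≤ (((insert a S).powerset.filter (fun T => T.sum id = m)).card : ℝ) := by
      intro m
      exact_mod_cast Finset.card_le_card (by
        intro T hT
        simp only [mem_filter, mem_powerset] at hT ⊢
        exact ⟨hT.1.trans (subset_insert a S), hT.2⟩)
    by_cases hak : a ≤ k
    · rw [if_pos hak]
      have key : (S.powerset.filter (fun T => T.sum id = k)).card
          + (S.powerset.filter (fun T => T.sum id = k - a)).card
          ≤ ((insert a S).powerset.filter (fun T => T.sum id = k)).card := by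
        have hinj : Set.InjOn (insert a)
            (↑(S.powerset.filter (fun T => T.sum id = k - a)) : Set (Finset ℕ)) := by
          intro T1 h1 T2 h2 h
          simp only [coe_filter, Set.mem_setOf_eq, mem_powerset] at h1 h2
          have ha1 : a ∉ T1 := fun h' => ha (h1.1 h')
          have ha2 : a ∉ T2 := fun h' => ha (h2.1 h')
          rw [← Finset.erase_insert ha1, ← Finset.erase_insert ha2, h]
        have hdisj2 : Disjoint (S.powerset.filter (fun T => T.sum id = k))
            ((S.powerset.filter (fun T => T.sum id = k - a)).image (insert a)) := by
          rw [Finset.disjoint_left]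
          intro T hT1 hT2
          simp only [mem_filter, mem_powerset, mem_image] at hT1 hT2
          obtain ⟨T', _, rfl⟩ := hT2
          exact (fun h' => ha (hT1.1 h')) (mem_insert_self a T')
        rw [← Finset.card_image_of_injOn hinj, ← Finset.card_union_of_disjoint hdisj2]
        apply Finset.card_le_card
        intro T hT
        simp only [mem_union, mem_filter, mem_powerset, mem_image] at hT ⊢
        rcases hT with h | ⟨T', hT', rfl⟩
        · exact ⟨h.1.trans (subset_insert a S), h.2⟩
        · have haT' : a ∉ T' := fun h' => ha (hT'.1 h')
          refine ⟨insert_subset_insert a hT'.1, ?_⟩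
          rw [Finset.sum_insert haT', hT'.2]
          simp only [id]
          omega
      have step1 : ‖P.coeff k - c a * P.coeff (k - a)‖
          ≤ ‖P.coeff k‖ + ‖c a‖ * ‖P.coeff (k - a)‖ := by
        simpa using norm_sub_le (P.coeff k) (c a * P.coeff (k - a))
      have step2 : ‖c a‖ * ‖P.coeff (k - a)‖
          ≤ ((S.powerset.filter (fun T => T.sum id = k - a)).card : ℝ) := by
        calc ‖c a‖ * ‖P.coeff (k - a)‖
            ≤ 1 * ‖P.coeff (k - a)‖ := by gcongr; exact hc a
          _ = ‖P.coeff (k - a)‖ := one_mul _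
          _ ≤ _ := ih (k - a)
      calc ‖P.coeff k - c a * P.coeff (k - a)‖
          ≤ ((S.powerset.filter (fun T => T.sum id = k)).card : ℝ)
            + ((S.powerset.filter (fun T => T.sum id = k - a)).card : ℝ) :=
            step1.trans (add_le_add (ih k) step2)
        _ ≤ _ := by exact_mod_cast key
    · rw [if_neg hak]
      simpa using (ih k).trans (hmono k)

private lemma count_le_partitions (S : Finset ℕ) (hS : ∀ n ∈ S, 0 < n) (k : ℕ) :
    (S.powerset.filter (fun T => T.sum id = k)).card ≤ Fintype.card (Nat.Partition k) := by
  classical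
  rw [← Fintype.card_coe]
  apply Fintype.card_le_of_injective
    (fun T => ⟨(T.1.val : Multiset ℕ),
      fun {i} hi => hS i ((mem_powerset.1 (mem_filter.1 T.2).1) hi),
      by
        have := (mem_filter.1 T.2).2
        rw [← Finset.sum_map_val, Multiset.map_id] at this; exact this⟩)
  intro T1 T2 h
  ext1
  exact Finset.val_injective (congrArg Nat.Partition.parts h)

/-- Let `k ≥ 1`, let `S₁, S₂` be disjoint finite sets of positive integers and let
`α, β` be complex numbers of absolute value at most `1`.  Then the coefficient of
`q^k` in `∏_{n∈S₁} (1 - α q^n) * ∏_{n∈S₂} (1 - β q^n)` has absolute value at most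
`p(k)`, the number of partitions of `k`. -/
theorem abs_coeff_le_card_partitions (k : ℕ) (hk : 1 ≤ k)
    (S₁ S₂ : Finset ℕ) (hS₁ : ∀ n ∈ S₁, 0 < n) (hS₂ : ∀ n ∈ S₂, 0 < n)
    (hdisj : Disjoint S₁ S₂) (α β : ℂ)
    (hα : ‖α‖ ≤ 1) (hβ : ‖β‖ ≤ 1) :
    ‖((∏ n ∈ S₁, (1 - C α * X ^ n)) * ∏ n ∈ S₂, (1 - C β * X ^ n)).coeff k‖
      ≤ Fintype.card (Nat.Partition k) := by
  classical
  set c : ℕ → ℂ := fun n => if n ∈ S₁ then α else β with hc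
  have hc1 : ∀ n, ‖c n‖ ≤ 1 := by
    intro n; by_cases h : n ∈ S₁ <;> simp [hc, h, hα, hβ]
  have hprod : (∏ n ∈ S₁, (1 - C α * X ^ n)) * ∏ n ∈ S₂, (1 - C β * X ^ n)
      = ∏ n ∈ S₁ ∪ S₂, (1 - C (c n) * X ^ n) := by
    rw [Finset.prod_union hdisj]
    congr 1
    · exact Finset.prod_congr rfl fun n hn => by simp [hc, hn]
    · refine Finset.prod_congr rfl fun n hn => ?_
      have : n ∉ S₁ := Finset.disjoint_right.1 hdisj hn
      simp [hc, this]
  rw [hprod]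
  refine (coeff_bound c hc1 (S₁ ∪ S₂) k).trans ?_
  exact_mod_cast count_le_partitions (S₁ ∪ S₂)
    (fun n hn => (Finset.mem_union.1 hn).elim (hS₁ n) (hS₂ n)) k
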